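/- arXiv:2003.05479 — 2 statements merged into one kernel-verified Lean document; each statement's English description precedes it below -/
import Mathlib

section
/- For the location-scale model, the minimizer of the transportation cost C(μ, σ) = μ² + σ² + (1/n)Σ xᵢ² − 2 Σ xᵢ ∫_{z_{i−1}}^{z_i} (σz + μ) f(z) dz over (μ, σ) is μ̂ = (1/n) Σ xᵢ and σ̂ = Σ kᵢ xᵢ, where kᵢ = ∫_{z_{i−1}}^{z_i} z f(z) dz. -/
open MeasureTheory

/-- The `i`-th cell (for `1 ≤ i ≤ n`) of the partition of `ℝ` determined by interior points
`z 1 < ⋯ < z (n-1)`, with `z 0 = -∞` and `z n = ∞`. -/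
def partitionCell (n : ℕ) (z : ℕ → ℝ) (i : ℕ) : Set ℝ :=
  if i = 1 then Set.Iic (z 1)
  else if i = n then Set.Ioi (z (n - 1))
  else Set.Ioc (z (i - 1)) (z i)

/-- The minimizer over `(μ, σ)` of the transportation cost
`C(μ, σ) = μ² + σ² + (1/n) Σ xᵢ² - 2 Σ xᵢ ∫_{z_{i-1}}^{z_i} (σz + μ) f(z) dz`
of the location-scale model is `μ̂ = (1/n) Σ xᵢ`, `σ̂ = Σ kᵢ xᵢ`,
where `kᵢ = ∫_{z_{i-1}}^{z_i} z f(z) dz`. -/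
theorem w_estimator_minimizes (n : ℕ) (hn : 1 < n) (f : ℝ → ℝ) (z x : ℕ → ℝ)
    (hx_mono : MonotoneOn x (Set.Icc 1 n))
    (hf_nonneg : ∀ t, 0 ≤ f t)
    (hf_int : Integrable f)
    (hf_prob : ∫ t, f t = 1)
    (hf_mean : ∫ t, t * f t = 0)
    (hf_var : ∫ t, t ^ 2 * f t = 1)
    (hf_m1 : Integrable (fun t => t * f t))
    (hz_mono : StrictMonoOn z (Set.Icc 1 (n - 1)))
    (hz_prob : ∀ i ∈ Finset.Icc 1 n, (∫ t in partitionCell n z i, f t) = 1 / n)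
    (k : ℕ → ℝ) (hk : ∀ i ∈ Finset.Icc 1 n, k i = ∫ t in partitionCell n z i, t * f t)
    (C : ℝ → ℝ → ℝ)
    (hC : ∀ μ σ, C μ σ = μ ^ 2 + σ ^ 2 + (1 / n) * ∑ i ∈ Finset.Icc 1 n, (x i) ^ 2
      - 2 * ∑ i ∈ Finset.Icc 1 n, x i * ∫ t in partitionCell n z i, (σ * t + μ) * f t)
    (μhat σhat : ℝ)
    (hμhat : μhat = (1 / n) * ∑ i ∈ Finset.Icc 1 n, x i)
    (hσhat : σhat = ∑ i ∈ Finset.Icc 1 n, k i * x i) :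
    ∀ μ σ, C μhat σhat ≤ C μ σ := by
  have key : ∀ (μ σ : ℝ), ∀ i ∈ Finset.Icc 1 n,
      x i * ∫ t in partitionCell n z i, (σ * t + μ) * f t
        = σ * (k i * x i) + μ * (1 / n) * x i := by
    intro μ σ i hi
    have h1 : IntegrableOn (fun t => t * f t) (partitionCell n z i) := hf_m1.integrableOn
    have h2 : IntegrableOn f (partitionCell n z i) := hf_int.integrableOn
    have heq : (fun t => (σ * t + μ) * f t) = (fun t => σ * (t * f t) + μ * f t) := by
      funext t; ring
    rw [heq, integral_add (h1.const_mul σ) (h2.const_mul μ),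
      integral_const_mul, integral_const_mul, hz_prob i hi, ← hk i hi]
    ring
  intro μ σ
  have hsum : ∀ (μ σ : ℝ),
      ∑ i ∈ Finset.Icc 1 n, x i * ∫ t in partitionCell n z i, (σ * t + μ) * f t
        = σ * σhat + μ * μhat := by
    intro μ σ
    rw [Finset.sum_congr rfl (key μ σ), Finset.sum_add_distrib,
      ← Finset.mul_sum, hσhat, hμhat]
    have : ∑ i ∈ Finset.Icc 1 n, μ * (1 / n) * x i
        = μ * ((1 / n) * ∑ i ∈ Finset.Icc 1 n, x i) := by
      simp only [mul_assoc, ← Finset.mul_sum]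
    rw [this]
  rw [hC, hC, hsum, hsum]
  nlinarith [sq_nonneg (μ - μhat), sq_nonneg (σ - σhat)]
end

section
/- The partial derivatives of the cost C(μ, σ) for the location-scale model satisfy (1/2) ∂C/∂μ = μ − (1/n) Σ xᵢ and (1/2) ∂C/∂σ = σ − Σ kᵢ xᵢ, with kᵢ = ∫_{z_{i−1}}^{z_i} z f(z) dz independent of μ and σ. -/
open MeasureTheory

/-! Each cell integral is affine in `(μ, σ)`, with coefficients `kᵢ` and the cell mass `1/n`,
so `C` is the separable quadratic `(μ² - 2μ·x̄) + (σ² - 2σ·Σ kᵢxᵢ) + const`. -/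

theorem integral_affine_mul {ν : Measure ℝ} {f : ℝ → ℝ} (hf : Integrable f ν)
    (hf₁ : Integrable (fun t => t * f t) ν) (a b : ℝ) :
    ∫ t, (a * t + b) * f t ∂ν = a * ∫ t, t * f t ∂ν + b * ∫ t, f t ∂ν := by
  simp only [add_mul, mul_assoc]
  rw [integral_add (hf₁.const_mul a) (hf.const_mul b), integral_const_mul, integral_const_mul]

theorem hasDerivAt_sq_sub_two_mul (b x : ℝ) :
    HasDerivAt (fun y => y ^ 2 - 2 * (y * b)) (2 * (x - b)) x := by
  have h := (hasDerivAt_pow 2 x).sub (((hasDerivAt_id' x).mul_const b).const_mul 2)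
  exact h.congr_deriv (by norm_num; ring)

theorem cost_partial_derivs_general (n : ℕ) (f : ℝ → ℝ) (z x : ℕ → ℝ)
    (hf_int : Integrable f)
    (hf_m1 : Integrable (fun t => t * f t))
    (hz_prob : ∀ i ∈ Finset.Icc 1 n, (∫ t in partitionCell n z i, f t) = 1 / n)
    (k : ℕ → ℝ) (hk : ∀ i ∈ Finset.Icc 1 n, k i = ∫ t in partitionCell n z i, t * f t)
    (C : ℝ → ℝ → ℝ)
    (hC : ∀ μ σ, C μ σ = μ ^ 2 + σ ^ 2 + (1 / n) * ∑ i ∈ Finset.Icc 1 n, (x i) ^ 2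
      - 2 * ∑ i ∈ Finset.Icc 1 n, x i * ∫ t in partitionCell n z i, (σ * t + μ) * f t) :
    ∀ μ σ : ℝ,
      HasDerivAt (fun m => C m σ)
        (2 * (μ - (1 / n) * ∑ i ∈ Finset.Icc 1 n, x i)) μ ∧
      HasDerivAt (fun s => C μ s)
        (2 * (σ - ∑ i ∈ Finset.Icc 1 n, k i * x i)) σ := by
  set xbar := (1 / (n : ℝ)) * ∑ i ∈ Finset.Icc 1 n, x i
  set K := ∑ i ∈ Finset.Icc 1 n, k i * x i
  set A := (1 / (n : ℝ)) * ∑ i ∈ Finset.Icc 1 n, x i ^ 2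
  have hC_quad : ∀ μ σ, C μ σ = (μ ^ 2 - 2 * (μ * xbar)) + (σ ^ 2 - 2 * (σ * K)) + A := by
    intro μ σ
    have hcell : ∀ i ∈ Finset.Icc 1 n,
        x i * ∫ t in partitionCell n z i, (σ * t + μ) * f t
          = σ * (k i * x i) + μ * (1 / n * x i) := by
      intro i hi
      rw [integral_affine_mul hf_int.restrict hf_m1.restrict, hz_prob i hi, ← hk i hi]
      ring
    rw [hC, Finset.sum_congr rfl hcell, Finset.sum_add_distrib, ← Finset.mul_sum,
      ← Finset.mul_sum, ← Finset.mul_sum]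
    ring
  intro μ σ
  simp_rw [hC_quad]
  exact ⟨((hasDerivAt_sq_sub_two_mul xbar μ).add_const _).add_const A,
    ((hasDerivAt_sq_sub_two_mul K σ).const_add _).add_const A⟩

/-- The partial derivatives of
`C(μ, σ) = μ² + σ² + (1/n) Σ xᵢ² - 2 Σᵢ xᵢ ∫_{z_{i-1}}^{z_i} (σz + μ) f(z) dz`
satisfy `(1/2) ∂C/∂μ = μ - (1/n) Σ xᵢ` and `(1/2) ∂C/∂σ = σ - Σ kᵢ xᵢ`, where
`kᵢ = ∫_{z_{i-1}}^{z_i} z f(z) dz` does not depend on `μ`, `σ`. -/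
theorem cost_partial_derivs (n : ℕ) (hn : 1 < n) (f : ℝ → ℝ) (z x : ℕ → ℝ)
    (hf_nonneg : ∀ t, 0 ≤ f t)
    (hf_int : Integrable f)
    (hf_prob : ∫ t, f t = 1)
    (hf_mean : ∫ t, t * f t = 0)
    (hf_var : ∫ t, t ^ 2 * f t = 1)
    (hf_m1 : Integrable (fun t => t * f t))
    (hz_mono : StrictMonoOn z (Set.Icc 1 (n - 1)))
    (hz_prob : ∀ i ∈ Finset.Icc 1 n, (∫ t in partitionCell n z i, f t) = 1 / n)
    (k : ℕ → ℝ) (hk : ∀ i ∈ Finset.Icc 1 n, k i = ∫ t in partitionCell n z i, t * f t)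
    (C : ℝ → ℝ → ℝ)
    (hC : ∀ μ σ, C μ σ = μ ^ 2 + σ ^ 2 + (1 / n) * ∑ i ∈ Finset.Icc 1 n, (x i) ^ 2
      - 2 * ∑ i ∈ Finset.Icc 1 n, x i * ∫ t in partitionCell n z i, (σ * t + μ) * f t) :
    ∀ μ σ : ℝ,
      HasDerivAt (fun m => C m σ)
        (2 * (μ - (1 / n) * ∑ i ∈ Finset.Icc 1 n, x i)) μ ∧
      HasDerivAt (fun s => C μ s)
        (2 * (σ - ∑ i ∈ Finset.Icc 1 n, k i * x i)) σ :=
  cost_partial_derivs_general n f z x hf_int hf_m1 hz_prob k hk C hC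
end
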